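/- arXiv:math/0608665 — 5 statements merged into one kernel-verified Lean document; each statement's English description precedes it below -/
import Mathlib

section
/- There exists an absolute constant c > 0 such that for every 0 < ε ≤ 1/2 and every 1 ≤ m ≤ n there is a set Λ ⊂ B₂ⁿ which is an ε-cover of Ũ_m with respect to the Euclidean metric, satisfies Ũ_m ⊂ 2 conv Λ, and has cardinality |Λ| ≤ exp(c m log(c n/(m ε))). -/
/-!
Fix a support `S` with `|S| = m`. A maximal `ε`-separated subset of the coordinate ball
`{x ∈ B₂ⁿ : supp x ⊆ S}` is an `ε`-net of it, and comparing volumes of disjoint balls of radius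
`ε/2` bounds its size by `(1 + 2/ε)^m`. Let `Λ` be `0` together with these nets for all
`C(n, m) ≤ (e n / m)^m` supports. If `y ∈ Λ` is a net point within `ε` of `x ∈ Ũ_m` on the same
support, then `(x - y)/ε ∈ Ũ_m`, so `Ũ_m ⊆ conv Λ + ε Ũ_m`. Substituting this inclusion into
itself gives `Ũ_m ⊆ (1 - ε)⁻¹ conv Λ + εᵏ Ũ_m` for every `k`, and since `conv Λ` is closed,
`Ũ_m ⊆ (1 - ε)⁻¹ conv Λ ⊆ 2 conv Λ`.
-/

open Metric Set
open scoped Pointwise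

/-- `Ũ_m`: vectors in the Euclidean unit ball of `ℝⁿ` with at most `m` nonzero coordinates. -/
def sparseBall (n m : ℕ) : Set (EuclideanSpace ℝ (Fin n)) :=
  {x | ‖x‖ ≤ 1 ∧ {i | x i ≠ 0}.ncard ≤ m}

open scoped NNReal ENNReal

section Net

open MeasureTheory

variable {E : Type*} [NormedAddCommGroup E] [NormedSpace ℝ E] [FiniteDimensional ℝ E]

theorem Finset.card_le_of_pairwise_lt_dist {F : Finset E} {x : E} {r ε : ℝ} (hr : 0 ≤ r)
    (hε : 0 < ε) (hFr : ↑F ⊆ closedBall x r) (hF : (F : Set E).Pairwise fun a b => ε < dist a b) :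
    (F.card : ℝ) ≤ (1 + 2 * r / ε) ^ Module.finrank ℝ E := by
  rcases subsingleton_or_nontrivial E with hE | hE
  · have hF1 : F.card ≤ 1 := Finset.card_le_one_of_subsingleton F
    exact le_trans (by exact_mod_cast hF1) (one_le_pow₀ (le_add_of_nonneg_right (by positivity)))
  borelize E
  set μ : Measure E := Measure.addHaar
  set d := Module.finrank ℝ E
  have hdisj : (F : Set E).PairwiseDisjoint fun y => ball y (ε / 2) := fun a ha b hb hab =>
    ball_disjoint_ball (by linarith [hF ha hb hab])
  have hsub : (⋃ y ∈ F, ball y (ε / 2)) ⊆ ball x (r + ε / 2) :=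
    iUnion₂_subset fun y hy => ball_subset_ball' (by linarith [mem_closedBall.1 (hFr hy)])
  have hvol : (F.card : ℝ≥0∞) * ENNReal.ofReal ((ε / 2) ^ d) * μ (ball 0 1)
      ≤ ENNReal.ofReal ((r + ε / 2) ^ d) * μ (ball 0 1) := by
    calc (F.card : ℝ≥0∞) * ENNReal.ofReal ((ε / 2) ^ d) * μ (ball 0 1)
        = μ (⋃ y ∈ F, ball y (ε / 2)) := by
          rw [measure_biUnion_finset hdisj fun y _ => measurableSet_ball]
          simp [μ.addHaar_ball _ (half_pos hε).le, mul_assoc, d]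
      _ ≤ μ (ball x (r + ε / 2)) := measure_mono hsub
      _ = ENNReal.ofReal ((r + ε / 2) ^ d) * μ (ball 0 1) := μ.addHaar_ball _ (by positivity)
  rw [ENNReal.mul_le_mul_iff_left (measure_ball_pos μ 0 one_pos).ne' measure_ball_lt_top.ne,
    ← ENNReal.ofReal_natCast, ← ENNReal.ofReal_mul (by positivity),
    ENNReal.ofReal_le_ofReal_iff (by positivity), ← le_div_iff₀ (by positivity), ← div_pow] at hvol
  calc (F.card : ℝ) ≤ ((r + ε / 2) / (ε / 2)) ^ d := hvol
    _ = (1 + 2 * r / ε) ^ d := by congr 1; field_simp; ring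

theorem Metric.IsSeparated.encard_le_of_subset_closedBall {C : Set E} {x : E} {r : ℝ} {ε : ℝ≥0}
    (hr : 0 ≤ r) (hε : 0 < ε) (hC : IsSeparated ε C) (hCr : C ⊆ closedBall x r) :
    C.encard ≤ ⌊(1 + 2 * r / ε) ^ Module.finrank ℝ E⌋₊ := by
  by_contra! hlt
  obtain ⟨t, htC, ht⟩ :=
    exists_subset_encard_eq ((ENat.add_one_le_iff (ENat.natCast_ne_top _)).2 hlt)
  have htfin : t.Finite := finite_of_encard_eq_coe ht
  have hcard : (htfin.toFinset.card : ℝ) ≤ (1 + 2 * r / ε) ^ Module.finrank ℝ E := by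
    refine htfin.toFinset.card_le_of_pairwise_lt_dist hr hε (by simpa using htC.trans hCr) ?_
    intro a ha b hb hab
    have : (ε : ℝ≥0∞) < edist a b := hC (htC (by simpa using ha)) (htC (by simpa using hb)) hab
    rwa [edist_dist, ENNReal.coe_lt_ofReal] at this
  rw [htfin.encard_eq_coe_toFinset_card] at ht
  norm_cast at ht
  rw [ht] at hcard
  push_cast at hcard
  linarith [Nat.lt_floor_add_one ((1 + 2 * r / ε) ^ Module.finrank ℝ E)]

theorem exists_finset_forall_dist_le_of_subset_closedBall {s : Set E} {x : E} {r ε : ℝ}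
    (hr : 0 ≤ r) (hε : 0 < ε) (hs : s ⊆ closedBall x r) :
    ∃ N : Finset E, ↑N ⊆ s ∧ (N.card : ℝ) ≤ (1 + 2 * r / ε) ^ Module.finrank ℝ E ∧
      ∀ y ∈ s, ∃ z ∈ N, dist y z ≤ ε := by
  lift ε to ℝ≥0 using hε.le
  have hpack : packingNumber ε s ≠ ⊤ := by
    refine ne_top_of_le_ne_top (ENat.natCast_ne_top ⌊(1 + 2 * r / ε) ^ Module.finrank ℝ E⌋₊) ?_
    exact iSup₂_le fun C hCs => iSup_le fun hC =>
      hC.encard_le_of_subset_closedBall hr (mod_cast hε) (hCs.trans hs)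
  have hbound := (isSeparated_maximalSeparatedSet (ε := ε) (A := s)).encard_le_of_subset_closedBall
    hr (mod_cast hε) (maximalSeparatedSet_subset.trans hs)
  have hfin := finite_of_encard_le_coe hbound
  refine ⟨hfin.toFinset, by simpa using maximalSeparatedSet_subset, ?_, fun y hy => ?_⟩
  · rw [hfin.encard_eq_coe_toFinset_card, Nat.cast_le] at hbound
    exact (Nat.cast_le.2 hbound).trans (Nat.floor_le (by positivity))
  · obtain ⟨z, hz, hyz⟩ := mem_iUnion₂.1 (isCover_iff_subset_iUnion_closedBall.1
      (isCover_maximalSeparatedSet hpack) hy)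
    exact ⟨z, by simpa using hz, hyz⟩

end Net

section Absorption

variable {E : Type*} [NormedAddCommGroup E] [NormedSpace ℝ E]

theorem Convex.smul_set_subset_smul_set_of_le {K : Set E} (hK : Convex ℝ K) (hK0 : 0 ∈ K)
    {a b : ℝ} (ha : 0 ≤ a) (hab : a ≤ b) : a • K ⊆ b • K := by
  rw [show b = a + (b - a) by ring, hK.add_smul ha (sub_nonneg.2 hab)]
  exact subset_add_left _ (zero_mem_smul_set hK0)

theorem subset_inv_one_sub_smul_of_subset_add_smul {A K : Set E} (hA : Bornology.IsBounded A)
    (hK : Convex ℝ K) (hKc : IsClosed K) (hK0 : 0 ∈ K) {ε : ℝ} (hε0 : 0 ≤ ε) (hε1 : ε < 1)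
    (hAK : A ⊆ K + ε • A) : A ⊆ (1 - ε)⁻¹ • K := by
  set s := (1 - ε)⁻¹
  have hsK : K + (ε * s) • K = s • K := by
    have hs : 1 + ε * s = s := by
      have : 1 - ε ≠ 0 := (sub_pos.2 hε1).ne'
      simp only [s]; field_simp; ring
    conv_rhs => rw [← hs]
    rw [hK.add_smul zero_le_one (by positivity), one_smul]
  have hiter : ∀ k : ℕ, A ⊆ s • K + ε ^ k • A := by
    intro k
    induction k with
    | zero => exact fun x hx => ⟨0, zero_mem_smul_set hK0, x, by simpa using hx, zero_add x⟩
    | succ k ih =>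
      calc A ⊆ K + ε • A := hAK
        _ ⊆ K + ε • (s • K + ε ^ k • A) := by gcongr
        _ = s • K + ε ^ (k + 1) • A := by
          rw [smul_add, smul_smul, smul_smul, ← add_assoc, hsK, pow_succ']
  obtain ⟨R, hR, hAR⟩ := hA.subset_closedBall_lt 0 0
  rw [← (hKc.smul_of_ne_zero (inv_ne_zero (sub_pos.2 hε1).ne')).closure_eq]
  intro x hx
  refine Metric.mem_closure_iff.2 fun δ hδ => ?_
  obtain ⟨k, hk⟩ := exists_pow_lt_of_lt_one (div_pos hδ hR) hε1
  obtain ⟨y, hy, _, ⟨a, ha, rfl⟩, rfl⟩ := hiter k hx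
  refine ⟨y, hy, ?_⟩
  have ha' : ‖a‖ ≤ R := mem_closedBall_zero_iff.1 (hAR ha)
  calc dist (y + ε ^ k • a) y = ε ^ k * ‖a‖ := by
        rw [dist_eq_norm, add_sub_cancel_left, norm_smul, Real.norm_of_nonneg (by positivity)]
    _ ≤ ε ^ k * R := by gcongr
    _ < δ := (lt_div_iff₀ hR).1 hk

theorem subset_two_smul_convexHull_of_subset_add_smul {A Λ : Set E} (hA : Bornology.IsBounded A)
    (hΛ : Λ.Finite) (hΛ0 : 0 ∈ Λ) {ε : ℝ} (hε0 : 0 ≤ ε) (hε : ε ≤ 1 / 2)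
    (hAΛ : A ⊆ Λ + ε • A) : A ⊆ (2 : ℝ) • convexHull ℝ Λ := by
  have hK0 : 0 ∈ convexHull ℝ Λ := subset_convexHull ℝ Λ hΛ0
  refine (subset_inv_one_sub_smul_of_subset_add_smul hA (convex_convexHull ℝ Λ)
    (hΛ.isClosed_convexHull ℝ) hK0 hε0 (by linarith)
    (hAΛ.trans (add_subset_add_right (subset_convexHull ℝ Λ)))).trans ?_
  refine (convex_convexHull ℝ Λ).smul_set_subset_smul_set_of_le hK0 (inv_nonneg.2 (by linarith)) ?_
  rw [inv_le_comm₀ (by linarith) two_pos]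
  linarith

end Absorption

section Supported

variable {ι : Type*}

def supportSpan [DecidableEq ι] (S : Finset ι) : Submodule ℝ (EuclideanSpace ℝ ι) :=
  Submodule.span ℝ (range fun i : S => EuclideanSpace.single (i : ι) (1 : ℝ))

theorem finrank_supportSpan_le [DecidableEq ι] (S : Finset ι) :
    Module.finrank ℝ (supportSpan S) ≤ S.card :=
  (finrank_range_le_card _).trans (by simp)

variable [Fintype ι]

def supportedBall (S : Finset ι) : Set (EuclideanSpace ℝ ι) :=
  {x | ‖x‖ ≤ 1 ∧ ∀ i ∉ S, x i = 0}

theorem sub_mem_smul_supportedBall {S : Finset ι} {x y : EuclideanSpace ℝ ι}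
    (hx : x ∈ supportedBall S) (hy : y ∈ supportedBall S) {ε : ℝ} (hε : 0 < ε)
    (hxy : dist x y ≤ ε) : x - y ∈ ε • supportedBall S := by
  refine ⟨ε⁻¹ • (x - y), ⟨?_, fun i hi => by simp [hx.2 i hi, hy.2 i hi]⟩, smul_inv_smul₀ hε.ne' _⟩
  rw [norm_smul, Real.norm_of_nonneg (inv_nonneg.2 hε.le), ← dist_eq_norm]
  exact inv_mul_le_one_of_le₀ hxy hε.le

variable [DecidableEq ι]

theorem mem_supportSpan {S : Finset ι} {x : EuclideanSpace ℝ ι} (hx : ∀ i ∉ S, x i = 0) :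
    x ∈ supportSpan S := by
  rw [← (EuclideanSpace.basisFun ι ℝ).sum_repr x]
  refine Submodule.sum_mem _ fun i _ => ?_
  by_cases hi : i ∈ S
  · exact Submodule.smul_mem _ _ (Submodule.subset_span ⟨⟨i, hi⟩, by simp⟩)
  · simp [hx i hi]

theorem exists_finset_net_supportedBall (S : Finset ι) {ε : ℝ} (hε : 0 < ε) :
    ∃ N : Finset (EuclideanSpace ℝ ι), ↑N ⊆ supportedBall S ∧
      (N.card : ℝ) ≤ (1 + 2 / ε) ^ S.card ∧ ∀ x ∈ supportedBall S, ∃ y ∈ N, dist x y ≤ ε := by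
  obtain ⟨N, hNs, hNcard, hNnet⟩ :=
    exists_finset_forall_dist_le_of_subset_closedBall (s := (↑) ⁻¹' supportedBall S)
      (x := (0 : supportSpan S)) zero_le_one hε fun x hx => by simpa using hx.1
  refine ⟨N.map (Function.Embedding.subtype _), ?_, ?_, fun x hx => ?_⟩
  · simpa using hNs
  · rw [mul_one] at hNcard
    rw [Finset.card_map]
    exact hNcard.trans (pow_le_pow_right₀ (le_add_of_nonneg_right (by positivity))
      (finrank_supportSpan_le S))
  · obtain ⟨y, hy, hxy⟩ := hNnet ⟨x, mem_supportSpan hx.2⟩ hx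
    exact ⟨y, Finset.mem_map_of_mem _ hy, hxy⟩

end Supported

theorem supportedBall_subset_sparseBall {n m : ℕ} {S : Finset (Fin n)} (hS : S.card ≤ m) :
    supportedBall S ⊆ sparseBall n m := fun x hx =>
  ⟨hx.1, (ncard_le_ncard (fun i (hi : x i ≠ 0) => by_contra fun h => hi (hx.2 i h))
    S.finite_toSet).trans (by rwa [ncard_coe_finset])⟩

theorem exists_card_eq_and_mem_supportedBall {n m : ℕ} (hmn : m ≤ n) {x : EuclideanSpace ℝ (Fin n)}
    (hx : x ∈ sparseBall n m) : ∃ S : Finset (Fin n), S.card = m ∧ x ∈ supportedBall S := by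
  classical
  obtain ⟨S, hsupp, hS⟩ := Finset.exists_superset_card_eq (n := m) (s := {i | x i ≠ 0}.toFinset)
    (by rw [← ncard_eq_toFinset_card']; exact hx.2) (by simpa using hmn)
  exact ⟨S, hS, hx.1, fun i hi => by_contra fun h => hi (hsupp (by simpa using h))⟩

theorem Nat.choose_le_exp_one_mul_div_pow (n k : ℕ) :
    (n.choose k : ℝ) ≤ (Real.exp 1 * n / k) ^ k := by
  rcases k.eq_zero_or_pos with rfl | hk
  · simp
  have hk' : (0 : ℝ) < (k : ℝ) ^ k := by positivity
  calc (n.choose k : ℝ) ≤ n ^ k / k.factorial := Nat.choose_le_pow_div k n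
    _ = n ^ k / k ^ k * (k ^ k / k.factorial) := by field_simp
    _ ≤ n ^ k / k ^ k * Real.exp k := by
        gcongr; exact Real.pow_div_factorial_le_exp _ (by positivity) k
    _ = (Real.exp 1 * n / k) ^ k := by rw [← Real.exp_one_pow, div_pow, mul_pow]; ring

theorem one_add_choose_mul_le_exp {n m : ℕ} {ε : ℝ} (hε : 0 < ε) (hε2 : ε ≤ 1 / 2) (hm : 1 ≤ m)
    (hmn : m ≤ n) :
    1 + n.choose m * (1 + 2 / ε) ^ m ≤ Real.exp (18 * m * Real.log (18 * n / (m * ε))) := by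
  have hm' : (0 : ℝ) < m := by exact_mod_cast hm
  have hmn' : (m : ℝ) ≤ n := by exact_mod_cast hmn
  -- `18 = 2 · 3 · 3`: the point `0`, `e < 3`, and `1 + 2/ε ≤ 3/ε`.
  set u := 9 * (n : ℝ) / (m * ε)
  have hu : 1 ≤ u := by
    rw [le_div_iff₀ (by positivity)]
    nlinarith
  have hchoose : (n.choose m : ℝ) ≤ (3 * n / m) ^ m :=
    (Nat.choose_le_exp_one_mul_div_pow n m).trans (by gcongr; exact Real.exp_one_lt_three.le)
  have hnet : 1 + 2 / ε ≤ 3 / ε := by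
    have : 1 ≤ 1 / ε := by rw [le_div_iff₀ hε]; linarith
    linarith [show 3 / ε = 1 / ε + 2 / ε by ring]
  have hprod : n.choose m * (1 + 2 / ε) ^ m ≤ u ^ m :=
    calc n.choose m * (1 + 2 / ε) ^ m ≤ (3 * n / m) ^ m * (3 / ε) ^ m := by gcongr
      _ = u ^ m := by rw [← mul_pow]; congr 1; simp only [u]; field_simp; ring
  have hw : (1 : ℝ) ≤ 2 * u := by linarith
  calc 1 + n.choose m * (1 + 2 / ε) ^ m ≤ 2 * u ^ m := by linarith [one_le_pow₀ (n := m) hu]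
    _ ≤ 2 ^ m * u ^ m := by gcongr; exact le_self_pow₀ one_le_two (by omega)
    _ = (2 * u) ^ m := (mul_pow _ _ _).symm
    _ ≤ (2 * u) ^ (18 * m) := pow_le_pow_right₀ hw (by omega)
    _ = Real.exp (18 * m * Real.log (18 * n / (m * ε))) := by
        rw [show 18 * (n : ℝ) / (m * ε) = 2 * u by simp only [u]; ring,
          ← Real.exp_log (by linarith : (0 : ℝ) < 2 * u), ← Real.exp_nat_mul, Real.log_exp]
        push_cast; ring_nf

theorem exists_sparseBall_net {n m : ℕ} {ε : ℝ} (hε : 0 < ε) (hmn : m ≤ n) :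
    ∃ Λ : Finset (EuclideanSpace ℝ (Fin n)), 0 ∈ Λ ∧
      (Λ : Set (EuclideanSpace ℝ (Fin n))) ⊆ closedBall 0 1 ∧
      (Λ.card : ℝ) ≤ 1 + n.choose m * (1 + 2 / ε) ^ m ∧
      ∀ x ∈ sparseBall n m, ∃ y ∈ Λ, dist x y ≤ ε ∧ x - y ∈ ε • sparseBall n m := by
  classical
  choose N hNsub hNcard hNnet using fun S : Finset (Fin n) => exists_finset_net_supportedBall S hε
  refine ⟨insert 0 ((Finset.univ.powersetCard m).biUnion N), by simp, ?_, ?_, fun x hx => ?_⟩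
  · intro y hy
    simp only [Finset.coe_insert, Finset.coe_biUnion, mem_insert_iff, mem_iUnion] at hy
    obtain rfl | ⟨S, -, hyS⟩ := hy
    · exact mem_closedBall_self zero_le_one
    · exact mem_closedBall_zero_iff.2 (hNsub S hyS).1
  · calc _ ≤ (((Finset.univ.powersetCard m).biUnion N).card : ℝ) + 1 := by
          exact_mod_cast Finset.card_insert_le _ _
      _ ≤ ∑ S ∈ Finset.univ.powersetCard m, ((N S).card : ℝ) + 1 := by
          gcongr; exact_mod_cast Finset.card_biUnion_le
      _ ≤ ∑ _S ∈ Finset.univ.powersetCard m, (1 + 2 / ε) ^ m + 1 := by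
          gcongr with S hS
          exact (Finset.mem_powersetCard.1 hS).2 ▸ hNcard S
      _ = 1 + n.choose m * (1 + 2 / ε) ^ m := by simp [Finset.card_powersetCard]; ring
  · obtain ⟨S, hS, hxS⟩ := exists_card_eq_and_mem_supportedBall hmn hx
    obtain ⟨y, hy, hxy⟩ := hNnet S x hxS
    refine ⟨y, Finset.mem_insert_of_mem (Finset.mem_biUnion.2 ⟨S, by simpa using hS, hy⟩), hxy, ?_⟩
    exact smul_set_mono (supportedBall_subset_sparseBall hS.le)
      (sub_mem_smul_supportedBall hxS (hNsub S hy) hε hxy)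

/-- Lemma `cover`, first part: there is an absolute constant `c > 0` such that
for every `0 < ε ≤ 1/2` and `1 ≤ m ≤ n` there is an `ε`-cover `Λ ⊆ B₂ⁿ` of `Ũ_m` with
`Ũ_m ⊆ 2 conv Λ` and `|Λ| ≤ exp(c m log(c n/(m ε)))`. -/
theorem stmt4 :
    ∃ c : ℝ, 0 < c ∧
      ∀ (n m : ℕ) (ε : ℝ), 0 < ε → ε ≤ 1 / 2 → 1 ≤ m → m ≤ n →
      ∃ Λ : Set (EuclideanSpace ℝ (Fin n)),
        Λ ⊆ closedBall 0 1 ∧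
        (∀ x ∈ sparseBall n m, ∃ y ∈ Λ, dist x y ≤ ε) ∧
        sparseBall n m ⊆ (2 : ℝ) • convexHull ℝ Λ ∧
        Λ.Finite ∧ (Λ.ncard : ℝ) ≤ Real.exp (c * m * Real.log (c * n / (m * ε))) := by
  refine ⟨18, by norm_num, fun n m ε hε hε2 hm hmn => ?_⟩
  obtain ⟨Λ, hΛ0, hΛball, hΛcard, hΛnet⟩ := exists_sparseBall_net hε hmn
  have hbounded : Bornology.IsBounded (sparseBall n m) :=
    isBounded_closedBall.subset fun x hx => mem_closedBall_zero_iff.2 hx.1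
  have habsorb : sparseBall n m ⊆ ↑Λ + ε • sparseBall n m := fun x hx => by
    obtain ⟨y, hy, -, hxy⟩ := hΛnet x hx
    exact ⟨y, hy, x - y, hxy, add_sub_cancel y x⟩
  refine ⟨Λ, hΛball, fun x hx => ?_, subset_two_smul_convexHull_of_subset_add_smul hbounded
    Λ.finite_toSet hΛ0 hε.le hε2 habsorb, Λ.finite_toSet, ?_⟩
  · obtain ⟨y, hy, hxy, -⟩ := hΛnet x hx
    exact ⟨y, hy, hxy⟩
  · rw [ncard_coe_finset]
    exact hΛcard.trans (one_add_choose_mul_le_exp hε hε2 hm hmn)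
end

section
/- Let A : ℝⁿ → ℝ^k be a linear map, let T̃ ⊂ ℝⁿ be star-shaped (sT̃ ⊂ T̃ for all 0 < s < 1), let ρ > 0, and set T = ρ^{-1}(T̃ ∩ ρS^{n-1}). If there exists 0 < θ < 1 such that 1 − θ ≤ |Ax|² ≤ 1 + θ for all x ∈ T, then ker(A) ∩ T̃ ⊂ ρB₂ⁿ; in particular diam(ker(A) ∩ T̃) ≤ 2ρ (and ≤ ρ if T̃ is contained in a symmetric star-shaped set). -/
open Metric Set
open scoped Pointwise

/-! A point of the kernel of `A` lying in `T̃` outside `ρB₂ⁿ` can be shrunk, inside `T̃` and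
inside the kernel, onto the sphere `ρS^{n-1}`; its image in `T` is then killed by `A`,
contradicting `1 - θ ≤ |Ax|²` with `θ < 1`. -/

section StarShaped

variable {E : Type*} [NormedAddCommGroup E] [NormedSpace ℝ E]

theorem div_norm_smul_mem_inter_sphere {S : Set E} (hS : ∀ s : ℝ, 0 < s → s < 1 → s • S ⊆ S)
    {ρ : ℝ} (hρ : 0 < ρ) {x : E} (hx : x ∈ S) (hρx : ρ < ‖x‖) :
    (ρ / ‖x‖) • x ∈ S ∩ sphere 0 ρ := by
  have hx0 : 0 < ‖x‖ := hρ.trans hρx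
  have hs0 : 0 < ρ / ‖x‖ := div_pos hρ hx0
  refine ⟨hS _ hs0 ((div_lt_one hx0).2 hρx) (smul_mem_smul_set hx), ?_⟩
  rw [mem_sphere_zero_iff_norm, norm_smul, Real.norm_of_nonneg hs0.le, div_mul_cancel₀ _ hx0.ne']

theorem ker_inter_subset_closedBall_of_ne_zero {F : Type*} [AddCommGroup F] [Module ℝ F]
    (A : E →ₗ[ℝ] F) {S : Set E} (hS : ∀ s : ℝ, 0 < s → s < 1 → s • S ⊆ S)
    {ρ : ℝ} (hρ : 0 < ρ) (hA : ∀ y ∈ S ∩ sphere 0 ρ, A y ≠ 0) :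
    (LinearMap.ker A : Set E) ∩ S ⊆ closedBall 0 ρ := by
  rintro x ⟨hker, hxS⟩
  rw [mem_closedBall_zero_iff]
  by_contra! hρx
  refine hA _ (div_norm_smul_mem_inter_sphere hS hρ hxS hρx) ?_
  rw [map_smul, LinearMap.mem_ker.1 hker, smul_zero]

end StarShaped

theorem stmt14_general (n k : ℕ)
    (A : EuclideanSpace ℝ (Fin n) →ₗ[ℝ] EuclideanSpace ℝ (Fin k))
    (Ttil : Set (EuclideanSpace ℝ (Fin n)))
    (hstar : ∀ s : ℝ, 0 < s → s < 1 → s • Ttil ⊆ Ttil)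
    (ρ : ℝ) (hρ : 0 < ρ)
    (T : Set (EuclideanSpace ℝ (Fin n)))
    (hT : T = ρ⁻¹ • (Ttil ∩ sphere (0 : EuclideanSpace ℝ (Fin n)) ρ))
    (θ : ℝ) (hθ1 : θ < 1)
    (hA : ∀ x ∈ T, 1 - θ ≤ ‖A x‖ ^ 2 ∧ ‖A x‖ ^ 2 ≤ 1 + θ) :
    (LinearMap.ker A : Set (EuclideanSpace ℝ (Fin n))) ∩ Ttil ⊆ closedBall 0 ρ ∧
    Metric.diam ((LinearMap.ker A : Set (EuclideanSpace ℝ (Fin n))) ∩ Ttil) ≤ 2 * ρ := by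
  have hsub := ker_inter_subset_closedBall_of_ne_zero A hstar hρ fun y hy hAy => by
    have hyT : ρ⁻¹ • y ∈ T := hT ▸ smul_mem_smul_set hy
    have hlower := (hA _ hyT).1
    rw [map_smul, hAy, smul_zero, norm_zero] at hlower
    linarith
  exact ⟨hsub, diam_le_of_subset_closedBall hρ.le hsub⟩

/-- if `A : ℝⁿ → ℝ^k` is linear, `T̃` is star-shaped, `ρ > 0`,
`T = ρ⁻¹(T̃ ∩ ρS^{n-1})`, and `1 - θ ≤ |Ax|² ≤ 1 + θ` on `T` for some `0 < θ < 1`, then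
`ker(A) ∩ T̃ ⊆ ρB₂ⁿ`; in particular `diam(ker(A) ∩ T̃) ≤ 2ρ`. -/
theorem stmt14 (n k : ℕ)
    (A : EuclideanSpace ℝ (Fin n) →ₗ[ℝ] EuclideanSpace ℝ (Fin k))
    (Ttil : Set (EuclideanSpace ℝ (Fin n)))
    (hstar : ∀ s : ℝ, 0 < s → s < 1 → s • Ttil ⊆ Ttil)
    (ρ : ℝ) (hρ : 0 < ρ)
    (T : Set (EuclideanSpace ℝ (Fin n)))
    (hT : T = ρ⁻¹ • (Ttil ∩ sphere (0 : EuclideanSpace ℝ (Fin n)) ρ))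
    (θ : ℝ) (hθ0 : 0 < θ) (hθ1 : θ < 1)
    (hA : ∀ x ∈ T, 1 - θ ≤ ‖A x‖ ^ 2 ∧ ‖A x‖ ^ 2 ≤ 1 + θ) :
    (LinearMap.ker A : Set (EuclideanSpace ℝ (Fin n))) ∩ Ttil ⊆ closedBall 0 ρ ∧
    Metric.diam ((LinearMap.ker A : Set (EuclideanSpace ℝ (Fin n))) ∩ Ttil) ≤ 2 * ρ :=
  stmt14_general n k A Ttil hstar ρ hρ T hT θ hθ1 hA
end

section
/- Let 0 < p < 1, 1 ≤ m ≤ n, and set r = (1/p − 1) m^{1/p − 1/2}. Then for every x ∈ ℝⁿ, sup{ ⟨x,z⟩ : z ∈ rB_{p,∞}ⁿ ∩ B₂ⁿ } ≤ 2 (Σ_{i=1}^m (x_i*)²)^{1/2}, where (x_i*) is the non-increasing rearrangement of (|x_i|). Equivalently, rB_{p,∞}ⁿ ∩ B₂ⁿ ⊂ 2 conv Ũ_m. -/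
open Metric Set Finset
open scoped RealInnerProductSpace Pointwise

/-- `B_{p,∞}ⁿ`, the unit ball of weak-`ℓ_p`: all `x` with `|{i : |x_i| ≥ s}| ≤ s^{-p}` for all
`s > 0`. -/
def weakLpBall (n : ℕ) (p : ℝ) : Set (EuclideanSpace ℝ (Fin n)) :=
  {x | ∀ s : ℝ, 0 < s → ({i | s ≤ |x i|}.ncard : ℝ) ≤ s ^ (-p)}

/-!
By the rearrangement inequality, `⟪x, z⟫ ≤ ∑ xᵢ* zᵢ*`. Split this sum after `m` terms and put
`S = ∑_{i ≤ m} (xᵢ*)²`. The head is at most `√S` by Cauchy–Schwarz, as `|z| ≤ 1`. In the tail,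
`xᵢ* ≤ √(S / m)`, while `z ∈ r B_{p,∞}` forces `zᵢ* ≤ r i^{-1/p}`; comparing with an integral,
`∑_{i > m} i^{-1/p} ≤ m^{1 - 1/p} / (1/p - 1)`, and the choice of `r` makes the tail at most `√S`.

The bound `2√S` is attained on `2 Ũ_m` by `x` restricted to its `m` largest coordinates and
normalised, so it is the support function of the compact convex set `2 conv Ũ_m` at `x`;
Hahn–Banach separation then gives the inclusion.
-/

theorem sum_Ico_rpow_neg_le {a : ℝ} (ha : 1 < a) {m : ℕ} (hm : 1 ≤ m) (N : ℕ) :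
    ∑ k ∈ Ico m N, ((k : ℝ) + 1) ^ (-a) ≤ (m : ℝ) ^ (1 - a) / (a - 1) := by
  have hm0 : (0 : ℝ) < m := by exact_mod_cast hm
  have hbound : 0 ≤ (m : ℝ) ^ (1 - a) / (a - 1) := div_nonneg (by positivity) (by linarith)
  rcases lt_or_ge N m with hN | hN
  · simpa [Finset.Ico_eq_empty_of_le hN.le] using hbound
  have hN0 : (0 : ℝ) < N := hm0.trans_le (by exact_mod_cast hN)
  have hanti : AntitoneOn (fun t : ℝ => t ^ (-a)) (Icc (m : ℝ) N) := fun s hs t _ hst =>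
    Real.rpow_le_rpow_of_nonpos (hm0.trans_le hs.1) hst (by linarith)
  calc ∑ k ∈ Ico m N, ((k : ℝ) + 1) ^ (-a)
      ≤ ∫ t in (m : ℝ)..N, t ^ (-a) := by
        simpa using hanti.sum_le_integral_Ico hN
    _ = ((m : ℝ) ^ (1 - a) - (N : ℝ) ^ (1 - a)) / (a - 1) := by
        rw [integral_rpow (Or.inr ⟨by linarith, fun h => ?_⟩)]
        · rw [show -a + 1 = 1 - a by ring, ← neg_sub a 1, div_neg, ← neg_div, neg_sub]
        · rcases Set.mem_uIcc.1 h with h | h <;> linarith [h.1, h.2]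
    _ ≤ (m : ℝ) ^ (1 - a) / (a - 1) := by
        gcongr ?_ / _
        exact sub_le_self _ (by positivity)

theorem IsCompact.convexHull_of_finiteDimensional {E : Type*} [AddCommGroup E] [Module ℝ E]
    [TopologicalSpace E] [ContinuousAdd E] [ContinuousSMul ℝ E] [FiniteDimensional ℝ E]
    {s : Set E} (hs : IsCompact s) : IsCompact (convexHull ℝ s) := by
  let combo (k : ℕ) (q : (Fin k → ℝ) × (Fin k → E)) : E := ∑ i, q.1 i • q.2 i
  -- Carathéodory: every point of the hull is a convex combination of at most `dim E + 1` points
  have hull_eq : convexHull ℝ s = ⋃ k ∈ Set.Iic (Module.finrank ℝ E + 1),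
      combo k '' (stdSimplex ℝ (Fin k) ×ˢ univ.pi fun _ => s) := by
    refine Subset.antisymm (fun x hx => ?_) ?_
    · obtain ⟨ι, _, z, w, hzs, hz, hw0, hw1, rfl⟩ := eq_pos_convex_span_of_mem_convexHull hx
      let e := Fintype.equivFin ι
      have hcard : Fintype.card ι ≤ Module.finrank ℝ E + 1 :=
        hz.card_le_finrank_succ.trans (by gcongr; exact Submodule.finrank_le _)
      refine Set.mem_biUnion (x := Fintype.card ι) hcard
        ⟨(w ∘ e.symm, z ∘ e.symm), ⟨⟨fun i => (hw0 _).le, ?_⟩, fun i _ => hzs ⟨_, rfl⟩⟩, ?_⟩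
      · exact (e.symm.sum_comp w).trans hw1
      · exact e.symm.sum_comp fun i => w i • z i
    · refine iUnion₂_subset fun k _ => ?_
      rintro _ ⟨⟨w, z⟩, ⟨⟨hw0, hw1⟩, hz⟩, rfl⟩
      change ∑ i, w i • z i ∈ _
      rw [← Finset.centerMass_eq_of_sum_1 _ _ hw1]
      exact Finset.centerMass_mem_convexHull _ (fun i _ => hw0 i) (by simp [hw1])
        fun i _ => hz i (mem_univ i)
  rw [hull_eq]
  exact (finite_Iic _).isCompact_biUnion fun k _ =>
    ((isCompact_stdSimplex _ _).prod (isCompact_univ_pi fun _ => hs)).image (by fun_prop)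

theorem mem_of_forall_exists_inner_le {F : Type*} [NormedAddCommGroup F] [InnerProductSpace ℝ F]
    [CompleteSpace F] {C : Set F} (hconv : Convex ℝ C) (hclosed : IsClosed C) {z : F}
    (h : ∀ x, ∃ y ∈ C, ⟪x, z⟫ ≤ ⟪x, y⟫) : z ∈ C := by
  by_contra hz
  obtain ⟨f, u, hfC, hfz⟩ := geometric_hahn_banach_closed_point hconv hclosed hz
  obtain ⟨y, hyC, hy⟩ := h ((InnerProductSpace.toDual ℝ F).symm f)
  simp only [InnerProductSpace.toDual_symm_apply] at hy
  linarith [hfC y hyC]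

theorem exists_perm_antitone {n : ℕ} (f : Fin n → ℝ) :
    ∃ σ : Equiv.Perm (Fin n), Antitone (f ∘ σ) :=
  ⟨Tuple.sort (OrderDual.toDual ∘ f), Tuple.monotone_sort (OrderDual.toDual ∘ f)⟩

theorem inner_le_sum_abs_mul_abs_of_antitone {n : ℕ} (x z : EuclideanSpace ℝ (Fin n))
    {σ τ : Equiv.Perm (Fin n)} (hσ : Antitone fun i => |x (σ i)|)
    (hτ : Antitone fun i => |z (τ i)|) :
    ⟪x, z⟫ ≤ ∑ i, |x (σ i)| * |z (τ i)| :=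
  calc ⟪x, z⟫ = ∑ i, x i * z i := by simp [PiLp.inner_apply, mul_comm]
    _ ≤ ∑ i, |x i| * |z i| := Finset.sum_le_sum fun i _ => by rw [← abs_mul]; exact le_abs_self _
    _ = ∑ i, |x (σ i)| * |z (τ ((σ.trans τ.symm) i))| := by
        simp only [Equiv.trans_apply, Equiv.apply_symm_apply]
        exact (Equiv.sum_comp σ fun i => |x i| * |z i|).symm
    _ ≤ ∑ i, |x (σ i)| * |z (τ i)| := (hσ.monovary hτ).sum_mul_comp_perm_le_sum_mul

theorem mul_le_sum_filter_lt_of_antitone {n m : ℕ} (hmn : m ≤ n) {g : Fin n → ℝ}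
    (hg : Antitone g) {i : Fin n} (hi : m ≤ (i : ℕ)) :
    m * g i ≤ ∑ j ∈ univ.filter fun j : Fin n => (j : ℕ) < m, g j := by
  have := Finset.card_nsmul_le_sum (univ.filter fun j : Fin n => (j : ℕ) < m) g (g i)
    fun j hj => hg (Fin.le_def.2 (by simp at hj; omega))
  rwa [Fin.card_filter_val_lt, min_eq_right hmn, nsmul_eq_mul] at this

theorem sum_filter_not_lt_rpow_neg_le {a : ℝ} (ha : 1 < a) {m : ℕ} (hm : 1 ≤ m) (n : ℕ) :
    ∑ i ∈ univ.filter (fun i : Fin n => ¬ (i : ℕ) < m), ((i : ℝ) + 1) ^ (-a) ≤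
      (m : ℝ) ^ (1 - a) / (a - 1) := by
  have hIco : ∑ i ∈ univ.filter (fun i : Fin n => ¬ (i : ℕ) < m), ((i : ℝ) + 1) ^ (-a) =
      ∑ k ∈ Ico m n, ((k : ℝ) + 1) ^ (-a) := by
    rw [sum_filter,
      Fin.sum_univ_eq_sum_range (fun k => if ¬ k < m then ((k : ℝ) + 1) ^ (-a) else 0),
      ← sum_filter]
    congr 1
    ext k
    simp only [Finset.mem_filter, Finset.mem_range, Finset.mem_Ico]
    omega
  exact hIco ▸ sum_Ico_rpow_neg_le ha hm n

theorem sum_mul_abs_le_sqrt_of_norm_le_one {n : ℕ} (s : Finset (Fin n)) (f : Fin n → ℝ)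
    {z : EuclideanSpace ℝ (Fin n)} (hz : ‖z‖ ≤ 1) (τ : Equiv.Perm (Fin n)) :
    ∑ i ∈ s, f i * |z (τ i)| ≤ √(∑ i ∈ s, f i ^ 2) := by
  have hz2 : ∑ i ∈ s, |z (τ i)| ^ 2 ≤ 1 :=
    calc ∑ i ∈ s, |z (τ i)| ^ 2 ≤ ∑ i, |z (τ i)| ^ 2 :=
          sum_le_sum_of_subset_of_nonneg (subset_univ s) fun _ _ _ => by positivity
      _ = ‖z‖ ^ 2 := by
          simp only [sq_abs, EuclideanSpace.real_norm_sq_eq]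
          exact Equiv.sum_comp τ fun i => z i ^ 2
      _ ≤ 1 := pow_le_one₀ (norm_nonneg z) hz
  calc ∑ i ∈ s, f i * |z (τ i)| ≤ √(∑ i ∈ s, f i ^ 2) * √(∑ i ∈ s, |z (τ i)| ^ 2) :=
        Real.sum_mul_le_sqrt_mul_sqrt s f _
    _ ≤ √(∑ i ∈ s, f i ^ 2) :=
        mul_le_of_le_one_right (Real.sqrt_nonneg _) (Real.sqrt_le_one.2 hz2)

theorem sum_filter_not_lt_mul_le_sqrt {n m : ℕ} {a : ℝ} (ha : 1 < a) (hm : 1 ≤ m) (hmn : m ≤ n)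
    {f : Fin n → ℝ} (hf : Antitone f) (hf0 : ∀ i, 0 ≤ f i) {z : EuclideanSpace ℝ (Fin n)}
    {τ : Equiv.Perm (Fin n)}
    (hz : ∀ i, |z (τ i)| ≤ (a - 1) * m ^ (a - 1 / 2) * ((i : ℝ) + 1) ^ (-a)) :
    ∑ i ∈ univ.filter (fun i : Fin n => ¬ (i : ℕ) < m), f i * |z (τ i)| ≤
      √(∑ i ∈ univ.filter (fun i : Fin n => (i : ℕ) < m), f i ^ 2) := by
  set S := ∑ i ∈ univ.filter (fun i : Fin n => (i : ℕ) < m), f i ^ 2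
  have hm0 : (0 : ℝ) < m := by exact_mod_cast hm
  have hfS : ∀ i ∈ univ.filter (fun i : Fin n => ¬ (i : ℕ) < m), f i ≤ √(S / m) := by
    intro i hi
    have hi : m ≤ (i : ℕ) := not_lt.1 (Finset.mem_filter.1 hi).2
    have := mul_le_sum_filter_lt_of_antitone hmn
      (fun j k hjk => pow_le_pow_left₀ (hf0 k) (hf hjk) 2) hi
    exact Real.le_sqrt_of_sq_le ((le_div_iff₀' hm0).2 this)
  have hscale : √(S / m) * ((a - 1) * m ^ (a - 1 / 2)) * ((m : ℝ) ^ (1 - a) / (a - 1)) = √S := by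
    have hpow : (m : ℝ) ^ (a - 1 / 2) * (m : ℝ) ^ (1 - a) = √m := by
      rw [← Real.rpow_add hm0, Real.sqrt_eq_rpow]; ring_nf
    have : a - 1 ≠ 0 := by linarith
    rw [Real.sqrt_div' _ hm0.le, ← hpow]
    field_simp
  calc ∑ i ∈ univ.filter (fun i : Fin n => ¬ (i : ℕ) < m), f i * |z (τ i)|
      ≤ ∑ i ∈ univ.filter (fun i : Fin n => ¬ (i : ℕ) < m),
          √(S / m) * ((a - 1) * m ^ (a - 1 / 2) * ((i : ℝ) + 1) ^ (-a)) :=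
        sum_le_sum fun i hi => mul_le_mul (hfS i hi) (hz i) (abs_nonneg _) (Real.sqrt_nonneg _)
    _ = √(S / m) * ((a - 1) * m ^ (a - 1 / 2)) *
          ∑ i ∈ univ.filter (fun i : Fin n => ¬ (i : ℕ) < m), ((i : ℝ) + 1) ^ (-a) := by
        rw [mul_sum]; simp only [mul_assoc]
    _ ≤ √(S / m) * ((a - 1) * m ^ (a - 1 / 2)) * ((m : ℝ) ^ (1 - a) / (a - 1)) := by
        have : 0 ≤ a - 1 := by linarith
        gcongr
        exact sum_filter_not_lt_rpow_neg_le ha hm n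
    _ = √S := hscale

theorem abs_le_rpow_of_mem_weakLpBall {n : ℕ} {p : ℝ} (hp : 0 < p) {w : EuclideanSpace ℝ (Fin n)}
    (hw : w ∈ weakLpBall n p) {τ : Equiv.Perm (Fin n)} (hτ : Antitone fun i => |w (τ i)|)
    (k : Fin n) : |w (τ k)| ≤ ((k : ℝ) + 1) ^ (-(1 / p)) := by
  set s := |w (τ k)|
  rcases (abs_nonneg _ : 0 ≤ s).eq_or_lt with hs | hs
  · rw [show s = 0 from hs.symm]; positivity
  have hcard : ((k : ℝ) + 1) ≤ {i | s ≤ |w i|}.ncard := by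
    have hsub : τ '' Set.Iic k ⊆ {i | s ≤ |w i|} := by
      rintro _ ⟨j, hj, rfl⟩
      exact hτ hj
    have := Set.ncard_le_ncard hsub
    rw [Set.ncard_image_of_injective _ τ.injective, ← Finset.coe_Iic, Set.ncard_coe_finset,
      Fin.card_Iic] at this
    exact_mod_cast this
  calc s = (s ^ (-p)) ^ (-(1 / p)) := by
        rw [← Real.rpow_mul hs.le, neg_mul_neg, mul_one_div_cancel hp.ne', Real.rpow_one]
    _ ≤ ((k : ℝ) + 1) ^ (-(1 / p)) :=
        Real.rpow_le_rpow_of_nonpos (by positivity) (hcard.trans (hw s hs))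
          (by simp only [one_div, Left.neg_nonpos_iff, inv_nonneg]; exact hp.le)

theorem inner_le_two_sqrt_sum_sq_head {n m : ℕ} {p : ℝ} (hp0 : 0 < p) (hp1 : p < 1) (hm : 1 ≤ m)
    (hmn : m ≤ n) {x z : EuclideanSpace ℝ (Fin n)} {σ : Equiv.Perm (Fin n)}
    (hσ : Antitone fun i => |x (σ i)|)
    (hz : z ∈ ((1 / p - 1) * (m : ℝ) ^ (1 / p - 1 / 2)) • weakLpBall n p ∩ closedBall 0 1) :
    ⟪x, z⟫ ≤ 2 * √(∑ i ∈ univ.filter fun i : Fin n => (i : ℕ) < m, |x (σ i)| ^ 2) := by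
  obtain ⟨⟨w, hw, rfl⟩, hz1⟩ := hz
  rw [mem_closedBall_zero_iff] at hz1
  set a := 1 / p
  have ha : 1 < a := (one_lt_div hp0).2 hp1
  set r := (a - 1) * (m : ℝ) ^ (a - 1 / 2)
  have hr : 0 ≤ r := mul_nonneg (by linarith) (by positivity)
  obtain ⟨τ, hτ⟩ := exists_perm_antitone fun i => |w i|
  have habs : ∀ i, |(r • w) i| = r * |w i| := fun i => by simp [abs_mul, abs_of_nonneg hr]
  have hzτ : Antitone fun i => |(r • w) (τ i)| := fun i j hij => by
    simp only [habs]
    exact mul_le_mul_of_nonneg_left (hτ hij) hr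
  have hdecay : ∀ i, |(r • w) (τ i)| ≤ r * ((i : ℝ) + 1) ^ (-a) := fun i => by
    rw [habs]
    exact mul_le_mul_of_nonneg_left (abs_le_rpow_of_mem_weakLpBall hp0 hw hτ i) hr
  calc ⟪x, r • w⟫ ≤ ∑ i, |x (σ i)| * |(r • w) (τ i)| :=
        inner_le_sum_abs_mul_abs_of_antitone _ _ hσ hzτ
    _ = ∑ i ∈ univ.filter (fun i : Fin n => (i : ℕ) < m), |x (σ i)| * |(r • w) (τ i)| +
        ∑ i ∈ univ.filter (fun i : Fin n => ¬ (i : ℕ) < m), |x (σ i)| * |(r • w) (τ i)| :=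
        (sum_filter_add_sum_filter_not _ _ _).symm
    _ ≤ _ := add_le_add (sum_mul_abs_le_sqrt_of_norm_le_one _ _ hz1 τ)
        (sum_filter_not_lt_mul_le_sqrt ha hm hmn hσ (fun _ => abs_nonneg _) hdecay)
    _ = _ := (two_mul _).symm

theorem isClosed_setOf_ncard_ne_zero_le (n m : ℕ) :
    IsClosed {x : EuclideanSpace ℝ (Fin n) | {i | x i ≠ 0}.ncard ≤ m} := by
  rw [← isOpen_compl_iff, isOpen_iff_forall_mem_open]
  intro x hx
  refine ⟨{y | ∀ i ∈ {i | x i ≠ 0}, y i ≠ 0}, fun y hy => ?_, ?_, fun i hi => hi⟩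
  · simp only [mem_compl_iff, mem_ofPred_eq, not_le] at hx ⊢
    exact hx.trans_le (Set.ncard_le_ncard hy)
  · simp only [ofPred_forall]
    exact (Set.toFinite _).isOpen_biInter fun i _ => isOpen_ne_fun (by fun_prop) continuous_const

theorem isCompact_sparseBall (n m : ℕ) : IsCompact (sparseBall n m) := by
  have : sparseBall n m = closedBall 0 1 ∩ {x | {i | x i ≠ 0}.ncard ≤ m} := by
    ext x; simp [sparseBall]
  rw [this]
  exact (isCompact_closedBall 0 1).inter_right (isClosed_setOf_ncard_ne_zero_le n m)

theorem exists_mem_sparseBall_inner_eq {n : ℕ} (m : ℕ) (x : EuclideanSpace ℝ (Fin n))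
    (σ : Equiv.Perm (Fin n)) :
    ∃ y ∈ sparseBall n m,
      ⟪x, y⟫ = √(∑ i ∈ univ.filter fun i : Fin n => (i : ℕ) < m, |x (σ i)| ^ 2) := by
  set T := (univ.filter fun i : Fin n => (i : ℕ) < m).map σ.toEmbedding
  set S := ∑ i ∈ univ.filter fun i : Fin n => (i : ℕ) < m, |x (σ i)| ^ 2
  have hS : S = ∑ j ∈ T, x j ^ 2 := by simp [T, S, sum_map, sq_abs]
  set u : EuclideanSpace ℝ (Fin n) := WithLp.toLp 2 fun j => if j ∈ T then x j else 0
  have hxu : ⟪x, u⟫ = S := by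
    simp [u, PiLp.inner_apply, hS, sum_ite_mem, sq]
  have hu : ‖u‖ = √S := by
    rw [← Real.sqrt_sq (norm_nonneg u), EuclideanSpace.real_norm_sq_eq, hS]
    simp [u, ite_pow, sum_ite_mem]
  -- if `S = 0` then `(√S)⁻¹ = 0`, and `y = 0` still works
  refine ⟨(√S)⁻¹ • u, ⟨?_, ?_⟩, ?_⟩
  · rw [norm_smul, hu, norm_inv, Real.norm_of_nonneg (Real.sqrt_nonneg _)]
    exact inv_mul_le_one
  · calc {j | ((√S)⁻¹ • u) j ≠ 0}.ncard ≤ (T : Set (Fin n)).ncard :=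
          Set.ncard_le_ncard fun j hj => by
            by_contra hjT
            exact hj (by simp [u, Finset.mem_coe.not.1 hjT])
      _ ≤ m := by
          rw [Set.ncard_coe_finset, card_map, Fin.card_filter_val_lt]
          exact min_le_right _ _
  · rw [real_inner_smul_right, hxu, inv_mul_eq_div, Real.div_sqrt]

/-- Lemma `convex_hull`: for `0 < p < 1`, `1 ≤ m ≤ n` and
`r = (1/p − 1)m^{1/p−1/2}`, every `x ∈ ℝⁿ` satisfies
`sup_{z ∈ rB_{p,∞}ⁿ ∩ B₂ⁿ} ⟪x,z⟫ ≤ 2(Σ_{i=1}^m (x_i*)²)^{1/2}`, where `(x_i*)` is the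
non-increasing rearrangement of `(|x_i|)`; equivalently `rB_{p,∞}ⁿ ∩ B₂ⁿ ⊆ 2 conv Ũ_m`. -/
theorem stmt16 (n m : ℕ) (p : ℝ) (hp0 : 0 < p) (hp1 : p < 1) (hm : 1 ≤ m) (hmn : m ≤ n)
    (r : ℝ) (hr : r = (1 / p - 1) * (m : ℝ) ^ (1 / p - 1 / 2)) :
    (∀ x : EuclideanSpace ℝ (Fin n), ∀ σ : Equiv.Perm (Fin n),
      (Antitone fun i => |x (σ i)|) →
      ∀ z ∈ (r • weakLpBall n p) ∩ closedBall (0 : EuclideanSpace ℝ (Fin n)) 1,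
        ⟪x, z⟫ ≤ 2 * Real.sqrt (∑ i ∈ Finset.univ.filter fun i : Fin n => (i : ℕ) < m,
          |x (σ i)| ^ 2)) ∧
    (r • weakLpBall n p) ∩ closedBall (0 : EuclideanSpace ℝ (Fin n)) 1 ⊆
      (2 : ℝ) • convexHull ℝ (sparseBall n m) := by
  subst hr
  refine ⟨fun x σ hσ z hz => inner_le_two_sqrt_sum_sq_head hp0 hp1 hm hmn hσ hz, fun z hz => ?_⟩
  have hC : IsCompact ((2 : ℝ) • convexHull ℝ (sparseBall n m)) :=
    (isCompact_sparseBall n m).convexHull_of_finiteDimensional.smul 2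
  refine mem_of_forall_exists_inner_le ((convex_convexHull ℝ _).smul 2) hC.isClosed fun x => ?_
  obtain ⟨σ, hσ⟩ := exists_perm_antitone fun i => |x i|
  obtain ⟨y, hy, hxy⟩ := exists_mem_sparseBall_inner_eq m x σ
  refine ⟨(2 : ℝ) • y, smul_mem_smul_set (subset_convexHull ℝ _ hy), ?_⟩
  rw [real_inner_smul_right, hxy]
  exact inner_le_two_sqrt_sum_sq_head hp0 hp1 hm hmn hσ hz
end

section
/- For every 1 ≤ m ≤ n, √m B₁ⁿ ∩ B₂ⁿ ⊂ 2 conv Ũ_m, where B₁ⁿ is the unit ball of ℓ₁ⁿ. -/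
/-!
Sort the coordinates of `x` by decreasing modulus and cut them into consecutive blocks of `m`.
The first block has Euclidean norm at most `‖x‖₂`. Every entry of a later block is at most the
average modulus `‖x_prev‖₁ / m` over the previous block, so that block has Euclidean norm at most
`‖x_prev‖₁ / √m`. A vector with at most `m` nonzero coordinates lies in its norm times
`conv Ũ_m`, hence `x ∈ (‖x‖₂ + ‖x‖₁ / √m) • conv Ũ_m ⊆ 2 • conv Ũ_m`.
-/

open Metric Set
open scoped Pointwise

/-- `B₁ⁿ`, the unit ball of `ℓ₁ⁿ`. -/
def l1Ball (n : ℕ) : Set (EuclideanSpace ℝ (Fin n)) :=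
  {x | ∑ i, |x i| ≤ 1}

theorem Finset.exists_subset_card_eq_forall_sdiff_le {α β : Type*} [DecidableEq α]
    [LinearOrder β] (f : α → β) {s : Finset α} {k : ℕ} (hk : k ≤ s.card) :
    ∃ t ⊆ s, t.card = k ∧ ∀ i ∈ t, ∀ j ∈ s \ t, f j ≤ f i := by
  induction k with
  | zero => exact ⟨∅, empty_subset s, rfl, by simp⟩
  | succ k ih =>
    obtain ⟨t, hts, rfl, ht⟩ := ih (Nat.le_of_succ_le hk)
    obtain ⟨i₀, hi₀, hmax⟩ := (s \ t).exists_max_image f <| by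
      rw [← card_pos, card_sdiff_of_subset hts]; omega
    refine ⟨insert i₀ t, insert_subset (mem_sdiff.mp hi₀).1 hts,
      card_insert_of_notMem (mem_sdiff.mp hi₀).2, ?_⟩
    intro i hi j hj
    rw [sdiff_insert] at hj
    rcases mem_insert.mp hi with rfl | hi
    · exact hmax j (mem_of_mem_erase hj)
    · exact ht i hi j (mem_of_mem_erase hj)

theorem exists_finset_card_le_forall_mul_abs_le_sum {ι : Type*} [Fintype ι] (x : ι → ℝ) {m : ℕ}
    (hm : 0 < m) :
    ∃ T : Finset ι, T.card ≤ m ∧ (∀ i ∉ T, m * |x i| ≤ ∑ j ∈ T, |x j|) ∧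
      (x ≠ 0 → ∃ i ∈ T, x i ≠ 0) := by
  classical
  set S := Finset.univ.filter fun i => x i ≠ 0
  obtain ⟨T, hTS, hTcard, hTmax⟩ :=
    Finset.exists_subset_card_eq_forall_sdiff_le (|x ·|) (min_le_right m S.card)
  refine ⟨T, hTcard ▸ min_le_left _ _, fun i hiT => ?_, fun hx0 => ?_⟩
  · by_cases hxi : x i = 0
    · rw [hxi, abs_zero, mul_zero]
      positivity
    have hiS : i ∈ S \ T := Finset.mem_sdiff.mpr ⟨by simpa [S] using hxi, hiT⟩
    have hTm : T.card = m := by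
      by_contra hTm
      rw [Finset.eq_of_subset_of_card_le hTS (by omega), Finset.sdiff_self] at hiS
      exact Finset.notMem_empty i hiS
    calc (m : ℝ) * |x i| = ∑ _j ∈ T, |x i| := by rw [Finset.sum_const, hTm, nsmul_eq_mul]
      _ ≤ ∑ j ∈ T, |x j| := Finset.sum_le_sum fun j hj => hTmax j hj i hiS
  · obtain ⟨i, hi⟩ := Function.ne_iff.mp hx0
    have hT : T.Nonempty := by
      rw [← Finset.card_pos, hTcard, lt_min_iff, Finset.card_pos]
      exact ⟨hm, i, by simpa [S] using hi⟩
    obtain ⟨j, hj⟩ := hT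
    exact ⟨j, hj, by simpa [S] using hTS hj⟩

namespace EuclideanSpace

variable {ι : Type*} [Fintype ι]

theorem norm_le_norm_of_forall_abs_le {x y : EuclideanSpace ℝ ι} (h : ∀ i, |y i| ≤ |x i|) :
    ‖y‖ ≤ ‖x‖ := by
  simp only [EuclideanSpace.norm_eq, Real.norm_eq_abs]
  exact Real.sqrt_le_sqrt <| Finset.sum_le_sum fun i _ ↦ pow_le_pow_left₀ (abs_nonneg _) (h i) 2

theorem norm_le_sqrt_mul_of_ncard_support_le {x : EuclideanSpace ℝ ι} {k : ℕ}
    (hk : {i | x i ≠ 0}.ncard ≤ k) {a : ℝ} (ha : 0 ≤ a) (hx : ∀ i, |x i| ≤ a) :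
    ‖x‖ ≤ √k * a := by
  classical
  have hcard : (Finset.univ.filter fun i => x i ≠ 0).card ≤ k := by
    rwa [Set.ncard_eq_toFinset_card', Set.toFinset_ofPred] at hk
  rw [EuclideanSpace.norm_eq, ← Real.sqrt_sq ha, ← Real.sqrt_mul (Nat.cast_nonneg k)]
  gcongr
  calc ∑ i, ‖x i‖ ^ 2 = ∑ i with x i ≠ 0, ‖x i‖ ^ 2 :=
        (Finset.sum_filter_of_ne fun i _ hi => by simpa using hi).symm
    _ ≤ ∑ i with x i ≠ 0, a ^ 2 := by
        gcongr with i; rw [Real.norm_eq_abs]; exact hx i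
    _ ≤ k * a ^ 2 := by
        rw [Finset.sum_const, nsmul_eq_mul]; gcongr

theorem ncard_support_smul_le (a : ℝ) (x : EuclideanSpace ℝ ι) :
    {i | (a • x) i ≠ 0}.ncard ≤ {i | x i ≠ 0}.ncard :=
  Set.ncard_le_ncard (fun _ hi => right_ne_zero_of_mul hi) (Set.toFinite _)

theorem exists_add_eq_head_tail (x : EuclideanSpace ℝ ι) {m : ℕ} (hm : 0 < m) :
    ∃ y z : EuclideanSpace ℝ ι, y + z = x ∧ {i | y i ≠ 0}.ncard ≤ m ∧ (∀ i, |y i| ≤ |x i|) ∧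
      (∀ i, √m * |z i| ≤ (∑ j, |y j|) / √m) ∧ ∑ i, |y i| + ∑ i, |z i| = ∑ i, |x i| ∧
      (x ≠ 0 → {i | z i ≠ 0}.ncard < {i | x i ≠ 0}.ncard) := by
  classical
  obtain ⟨T, hTcard, hT_tail, hT_supp⟩ := exists_finset_card_le_forall_mul_abs_le_sum x hm
  let y : EuclideanSpace ℝ ι := WithLp.toLp 2 fun i => if i ∈ T then x i else 0
  let z : EuclideanSpace ℝ ι := WithLp.toLp 2 fun i => if i ∈ T then 0 else x i
  have hy (i : ι) : y i = if i ∈ T then x i else 0 := rfl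
  have hz (i : ι) : z i = if i ∈ T then 0 else x i := rfl
  have hsum_y : ∑ j, |y j| = ∑ j ∈ T, |x j| := by
    simp only [hy, apply_ite, abs_zero, Finset.sum_ite_mem, Finset.univ_inter]
  have hsum_z : ∑ j, |z j| = ∑ j ∈ Tᶜ, |x j| := by
    simp [hz, apply_ite, Finset.sum_ite, Finset.filter_not, Finset.compl_eq_univ_sdiff]
  have hsqrt : 0 < √m := by positivity
  refine ⟨y, z, ?_, ?_, fun i => ?_, fun i => ?_, ?_, fun hx0 => ?_⟩
  · ext i
    rw [PiLp.add_apply, hy, hz]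
    split_ifs <;> simp
  · calc {i | y i ≠ 0}.ncard ≤ (T : Set ι).ncard :=
          Set.ncard_le_ncard fun i hi => by_contra fun h => hi ((hy i).trans (if_neg h))
      _ ≤ m := by rwa [Set.ncard_coe_finset]
  · rw [hy]
    split_ifs <;> simp
  · rw [le_div_iff₀ hsqrt, mul_right_comm, Real.mul_self_sqrt m.cast_nonneg, hsum_y, hz]
    split_ifs with hiT
    · rw [abs_zero, mul_zero]
      positivity
    · exact hT_tail i hiT
  · rw [hsum_y, hsum_z, Finset.sum_add_sum_compl]
  · obtain ⟨i, hiT, hi⟩ := hT_supp (by simpa using hx0)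
    refine Set.ncard_lt_ncard ⟨fun j hj hxj => hj ?_, fun h => h hi ?_⟩ (Set.toFinite _)
    · rw [hz, hxj, ite_self]
    · rw [hz, if_pos hiT]

end EuclideanSpace

open EuclideanSpace

variable {n m : ℕ}

theorem zero_mem_sparseBall : (0 : EuclideanSpace ℝ (Fin n)) ∈ sparseBall n m :=
  ⟨by simp, by simp⟩

theorem balanced_sparseBall : Balanced ℝ (sparseBall n m) := by
  rw [balanced_iff_smul_mem]
  rintro a ha x ⟨hx, hsupp⟩
  refine ⟨?_, (ncard_support_smul_le a x).trans hsupp⟩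
  rw [norm_smul]
  exact mul_le_one₀ ha (norm_nonneg x) hx

theorem smul_convexHull_sparseBall_mono {a b : ℝ} (ha : 0 ≤ a) (hab : a ≤ b) :
    a • convexHull ℝ (sparseBall n m) ⊆ b • convexHull ℝ (sparseBall n m) :=
  balanced_sparseBall.convexHull.smul_mono <| by
    rwa [Real.norm_of_nonneg ha, Real.norm_of_nonneg (ha.trans hab)]

theorem mem_smul_convexHull_sparseBall {x : EuclideanSpace ℝ (Fin n)}
    (hx : {i | x i ≠ 0}.ncard ≤ m) {c : ℝ} (hc : ‖x‖ ≤ c) :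
    x ∈ c • convexHull ℝ (sparseBall n m) := by
  refine smul_convexHull_sparseBall_mono (norm_nonneg x) hc <|
    Set.smul_set_mono (subset_convexHull ℝ _) ?_
  rcases eq_or_ne x 0 with rfl | hx0
  · exact ⟨0, zero_mem_sparseBall, smul_zero _⟩
  · refine ⟨‖x‖⁻¹ • x, ⟨(norm_smul_inv_norm hx0).le, (ncard_support_smul_le _ x).trans hx⟩, ?_⟩
    exact smul_inv_smul₀ (norm_ne_zero_iff.mpr hx0) x

theorem zero_mem_smul_convexHull_sparseBall (c : ℝ) :
    (0 : EuclideanSpace ℝ (Fin n)) ∈ c • convexHull ℝ (sparseBall n m) :=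
  Set.zero_mem_smul_set (subset_convexHull ℝ _ zero_mem_sparseBall)

theorem mem_smul_convexHull_sparseBall_of_sqrt_mul_abs_le (hm : 0 < m)
    (x : EuclideanSpace ℝ (Fin n)) {c : ℝ} (hc : 0 ≤ c) (hx : ∀ i, √m * |x i| ≤ c) :
    x ∈ (c + (∑ i, |x i|) / √m) • convexHull ℝ (sparseBall n m) := by
  induction hN : {i | x i ≠ 0}.ncard using Nat.strong_induction_on generalizing x c with
  | _ N ih =>
  rcases eq_or_ne x 0 with rfl | hx0
  · exact zero_mem_smul_convexHull_sparseBall _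
  obtain ⟨y, z, rfl, hy_supp, hyx, hzy, hsum, hz_supp⟩ := exists_add_eq_head_tail x hm
  have hsqrt : 0 < √m := by positivity
  have hy : y ∈ c • convexHull ℝ (sparseBall n m) := by
    refine mem_smul_convexHull_sparseBall hy_supp ?_
    calc ‖y‖ ≤ √m * (c / √m) := norm_le_sqrt_mul_of_ncard_support_le hy_supp (by positivity)
          fun i => (le_div_iff₀' hsqrt).mpr <|
            (mul_le_mul_of_nonneg_left (hyx i) hsqrt.le).trans (hx i)
      _ = c := mul_div_cancel₀ _ hsqrt.ne'
  have hz := ih _ (hN ▸ hz_supp hx0) z (by positivity) hzy rfl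
  rw [← hsum, add_div, (convex_convexHull ℝ _).add_smul hc (by positivity)]
  exact Set.add_mem_add hy hz

theorem mem_smul_convexHull_sparseBall_norm_add (hm : 0 < m) (x : EuclideanSpace ℝ (Fin n)) :
    x ∈ (‖x‖ + (∑ i, |x i|) / √m) • convexHull ℝ (sparseBall n m) := by
  obtain ⟨y, z, rfl, hy_supp, hyx, hzy, hsum, -⟩ := exists_add_eq_head_tail x hm
  have hy := mem_smul_convexHull_sparseBall hy_supp (norm_le_norm_of_forall_abs_le hyx)
  have hz := mem_smul_convexHull_sparseBall_of_sqrt_mul_abs_le hm z (by positivity) hzy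
  rw [← hsum, add_div, (convex_convexHull ℝ _).add_smul (norm_nonneg _) (by positivity)]
  exact Set.add_mem_add hy hz

theorem stmt17_general (n m : ℕ) (hm : 1 ≤ m) :
    (Real.sqrt m • l1Ball n) ∩ closedBall (0 : EuclideanSpace ℝ (Fin n)) 1 ⊆
      (2 : ℝ) • convexHull ℝ (sparseBall n m) := by
  rintro x ⟨⟨v, hv, rfl⟩, hx⟩
  have hsqrt : 0 < √m := by positivity
  have h_norm : ‖√m • v‖ ≤ 1 := mem_closedBall_zero_iff.mp hx
  have h_l1 : (∑ i, |(√m • v) i|) / √m ≤ 1 := by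
    simp only [PiLp.smul_apply, smul_eq_mul, abs_mul, abs_of_pos hsqrt, ← Finset.mul_sum,
      mul_div_cancel_left₀ _ hsqrt.ne']
    exact hv
  refine smul_convexHull_sparseBall_mono (by positivity) ?_
    (mem_smul_convexHull_sparseBall_norm_add hm _)
  linarith

/-- Lemma `convex_hull`, "furthermore" part: for every `1 ≤ m ≤ n`,
`√m B₁ⁿ ∩ B₂ⁿ ⊆ 2 conv Ũ_m`. -/
theorem stmt17 (n m : ℕ) (hm : 1 ≤ m) (hmn : m ≤ n) :
    (Real.sqrt m • l1Ball n) ∩ closedBall (0 : EuclideanSpace ℝ (Fin n)) 1 ⊆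
      (2 : ℝ) • convexHull ℝ (sparseBall n m) :=
  stmt17_general n m hm
end

section
/- Let 0 < p < 2, δ > 0, 1 ≤ m ≤ n with ⌈m/δ⌉ ≤ n, and set ε = 2(2/p − 1)^{−1/2} δ^{1/p − 1/2}. Then U_{⌈m/δ⌉} is an ε-cover of m^{1/p − 1/2} B_{p,∞}ⁿ ∩ S^{n-1} with respect to the Euclidean metric: for every x in this set there exists z ∈ S^{n-1} with |supp z| ≤ ⌈m/δ⌉ and |x − z| ≤ ε. -/
open Metric Set
open scoped Pointwise

theorem mul_rpow_neg_add_one_le_rpow_sub_rpow {b q : ℝ} (hb : 0 < b) (hq : 1 ≤ q) :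
    (q - 1) * (b + 1) ^ (-q) ≤ b ^ (1 - q) - (b + 1) ^ (1 - q) := by
  have hb1 : 0 < b + 1 := by linarith
  have bernoulli : 1 + q * b⁻¹ ≤ (1 + b⁻¹) ^ q :=
    one_add_mul_self_le_rpow_one_add (by linarith [inv_pos.mpr hb]) hq
  have hsplit : ∀ {a : ℝ}, 0 < a → a ^ (1 - q) = a * a ^ (-q) := fun ha => by
    rw [sub_eq_add_neg, Real.rpow_add ha, Real.rpow_one]
  have hratio : (1 + b⁻¹) ^ q * (b + 1) ^ (-q) = b ^ (-q) := by
    rw [show 1 + b⁻¹ = (b + 1) * b⁻¹ by field_simp, Real.mul_rpow hb1.le (inv_nonneg.mpr hb.le),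
      Real.inv_rpow hb.le, Real.rpow_neg hb1.le, Real.rpow_neg hb.le]
    field_simp
  have hpos : 0 ≤ (b + 1) ^ (-q) := by positivity
  have key : (b + q) * (b + 1) ^ (-q) ≤ b * ((1 + b⁻¹) ^ q * (b + 1) ^ (-q)) := by
    calc (b + q) * (b + 1) ^ (-q) = b * ((1 + q * b⁻¹) * (b + 1) ^ (-q)) := by field_simp
      _ ≤ _ := by gcongr
  rw [hsplit hb, hsplit hb1, ← hratio]
  linarith

theorem sum_range_rpow_neg_le {b q : ℝ} (hb : 0 < b) (hq : 1 < q) (N : ℕ) :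
    ∑ t ∈ Finset.range N, (b + 1 + t) ^ (-q) ≤ b ^ (1 - q) / (q - 1) := by
  have hq1 : 0 < q - 1 := by linarith
  set f : ℕ → ℝ := fun t => (b + t) ^ (1 - q) / (q - 1)
  have hstep : ∀ t : ℕ, (b + 1 + t) ^ (-q) ≤ f t - f (t + 1) := fun t => by
    have h := mul_rpow_neg_add_one_le_rpow_sub_rpow (b := b + t) (by positivity) hq.le
    simp only [f, Nat.cast_succ, ← sub_div, le_div_iff₀ hq1]
    rw [mul_comm, ← add_assoc, add_right_comm b 1]
    exact h
  calc ∑ t ∈ Finset.range N, (b + 1 + t) ^ (-q)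
      ≤ ∑ t ∈ Finset.range N, (f t - f (t + 1)) := Finset.sum_le_sum fun t _ => hstep t
    _ = f 0 - f N := Finset.sum_range_sub' f N
    _ ≤ f 0 := sub_le_self _ (by positivity)
    _ = b ^ (1 - q) / (q - 1) := by simp [f]

theorem ncard_le_div_rpow_of_mem_smul_weakLpBall {n : ℕ} {p c : ℝ} (hc : 0 < c)
    {x : EuclideanSpace ℝ (Fin n)} (hx : x ∈ c • weakLpBall n p) (t : ℝ) (ht : 0 < t) :
    ({i | t ≤ |x i|}.ncard : ℝ) ≤ (c / t) ^ p := by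
  obtain ⟨y, hy, rfl⟩ := hx
  have hset : {i | t ≤ |(c • y) i|} = {i | t / c ≤ |y i|} := by
    ext i
    simp [abs_mul, abs_of_pos hc, div_le_iff₀' hc]
  rw [hset]
  calc ({i | t / c ≤ |y i|}.ncard : ℝ) ≤ (t / c) ^ (-p) := hy _ (by positivity)
    _ = (c / t) ^ p := by
      rw [Real.rpow_neg (by positivity), ← Real.inv_rpow (by positivity), inv_div]

theorem apply_sort_le_of_ncard_le {n : ℕ} {v : Fin n → ℝ} {p c : ℝ} (hp : 0 < p) (hc : 0 ≤ c)
    (hv : ∀ t, 0 < t → ({i | t ≤ v i}.ncard : ℝ) ≤ (c / t) ^ p) (j : Fin n) :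
    v (Tuple.sort v j) ≤ c * ((n - j : ℕ) : ℝ) ^ (-p⁻¹) := by
  set t := v (Tuple.sort v j)
  have hA : (0 : ℝ) < (n - j : ℕ) := by exact_mod_cast Nat.sub_pos_of_lt j.isLt
  rcases le_or_gt t 0 with ht | ht
  · exact ht.trans (by positivity)
  have hcount : ((n - j : ℕ) : ℝ) ≤ (c / t) ^ p := by
    refine le_trans ?_ (hv t ht)
    have hsub : (((Finset.Ici j).map (Tuple.sort v).toEmbedding : Finset (Fin n)) : Set (Fin n))
        ⊆ {i | t ≤ v i} := fun i hi => by
      obtain ⟨j', hj', rfl⟩ := Finset.mem_map.mp hi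
      exact Tuple.monotone_sort v (Finset.mem_Ici.mp hj')
    have := Set.ncard_le_ncard hsub (Set.toFinite _)
    rw [Set.ncard_coe_finset, Finset.card_map, Fin.card_Ici] at this
    exact_mod_cast this
  have hroot : ((n - j : ℕ) : ℝ) ^ p⁻¹ ≤ c / t := by
    simpa [Real.rpow_rpow_inv (by positivity : 0 ≤ c / t) hp.ne'] using
      Real.rpow_le_rpow hA.le hcount (inv_nonneg.mpr hp.le)
  rw [Real.rpow_neg hA.le, ← div_eq_mul_inv, le_div_iff₀ (by positivity)]
  rw [le_div_iff₀ ht] at hroot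
  linarith

theorem exists_card_eq_sum_compl_sq_le {n k : ℕ} {x : Fin n → ℝ} {p c : ℝ} (hp0 : 0 < p)
    (hp2 : p < 2) (hc : 0 ≤ c) (hx : ∀ t, 0 < t → ({i | t ≤ |x i|}.ncard : ℝ) ≤ (c / t) ^ p)
    (hk : 0 < k) (hkn : k ≤ n) :
    ∃ T : Finset (Fin n), T.card = k ∧
      ∑ i ∈ Tᶜ, x i ^ 2 ≤ c ^ 2 * (k : ℝ) ^ (1 - 2 / p) / (2 / p - 1) := by
  set σ := Tuple.sort fun i => |x i|
  set a : Fin n := ⟨n - k, by omega⟩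
  have hcompl : ((Finset.Ici a).map σ.toEmbedding)ᶜ = (Finset.Iio a).map σ.toEmbedding := by
    ext; simp
  have hterm (j : Fin n) : x (σ j) ^ 2 ≤ c ^ 2 * ((n - j : ℕ) : ℝ) ^ (-(2 / p)) := by
    have h := apply_sort_le_of_ncard_le hp0 hc hx j
    calc x (σ j) ^ 2 = |x (σ j)| ^ 2 := (sq_abs _).symm
      _ ≤ (c * ((n - j : ℕ) : ℝ) ^ (-p⁻¹)) ^ 2 := pow_le_pow_left₀ (abs_nonneg _) h 2
      _ = c ^ 2 * ((n - j : ℕ) : ℝ) ^ (-(2 / p)) := by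
        rw [mul_pow, ← Real.rpow_mul_natCast (by positivity)]
        congr 2
        push_cast
        ring
  refine ⟨(Finset.Ici a).map σ.toEmbedding, by simp [a, Fin.card_Ici]; omega, ?_⟩
  calc ∑ i ∈ ((Finset.Ici a).map σ.toEmbedding)ᶜ, x i ^ 2
      = ∑ j ∈ Finset.Iio a, x (σ j) ^ 2 := by rw [hcompl, Finset.sum_map]; rfl
    _ ≤ ∑ j ∈ Finset.Iio a, c ^ 2 * ((n - j : ℕ) : ℝ) ^ (-(2 / p)) :=
      Finset.sum_le_sum fun j _ => hterm j
    _ = c ^ 2 * ∑ i ∈ Finset.range (n - k), ((n - i : ℕ) : ℝ) ^ (-(2 / p)) := by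
      rw [← Finset.mul_sum, ← Nat.Iio_eq_range, show n - k = (a : ℕ) from rfl,
        ← Fin.map_valEmbedding_Iio, Finset.sum_map]
      rfl
    _ = c ^ 2 * ∑ t ∈ Finset.range (n - k), ((k : ℝ) + 1 + t) ^ (-(2 / p)) := by
      rw [← Finset.sum_range_reflect]
      congr 1
      refine Finset.sum_congr rfl fun t ht => ?_
      rw [show n - (n - k - 1 - t) = k + 1 + t by grind]
      push_cast
      rfl
    _ ≤ c ^ 2 * ((k : ℝ) ^ (1 - 2 / p) / (2 / p - 1)) := by
      gcongr
      exact sum_range_rpow_neg_le (by positivity) ((one_lt_div hp0).mpr hp2) _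
    _ = c ^ 2 * (k : ℝ) ^ (1 - 2 / p) / (2 / p - 1) := (mul_div_assoc _ _ _).symm

theorem dist_normalize_le_two_mul_dist {V : Type*} [NormedAddCommGroup V] [NormedSpace ℝ V]
    {x : V} (hx : ‖x‖ = 1) (w : V) : dist x (NormedSpace.normalize w) ≤ 2 * dist x w := by
  rcases eq_or_ne w 0 with rfl | hw
  · simp [hx]
  have hdiff : w - NormedSpace.normalize w = (‖w‖ - 1) • NormedSpace.normalize w := by
    rw [sub_smul, one_smul, NormedSpace.norm_smul_normalize]
  have hw1 : dist w (NormedSpace.normalize w) ≤ dist x w := by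
    rw [dist_eq_norm, hdiff, norm_smul, NormedSpace.norm_normalize_eq_one_iff.mpr hw, mul_one,
      Real.norm_eq_abs, ← hx, dist_comm, dist_eq_norm]
    exact abs_norm_sub_norm_le w x
  linarith [dist_triangle x w (NormedSpace.normalize w)]

theorem exists_support_subset_norm_sub_sq_eq {ι : Type*} [Fintype ι] [DecidableEq ι]
    (x : EuclideanSpace ℝ ι) (T : Finset ι) :
    ∃ w : EuclideanSpace ℝ ι, {i | w i ≠ 0} ⊆ T ∧ ‖x - w‖ ^ 2 = ∑ i ∈ Tᶜ, x i ^ 2 := by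
  refine ⟨WithLp.toLp 2 fun i => if i ∈ T then x i else 0,
    fun i hi => by_contra fun hiT => hi (if_neg hiT), ?_⟩
  rw [EuclideanSpace.norm_sq_eq, ← Finset.univ_inter Tᶜ, ← Finset.sum_ite_mem]
  refine Finset.sum_congr rfl fun i _ => ?_
  by_cases hi : i ∈ T <;> simp [hi]

theorem exists_norm_eq_one_support_subset_dist_le {ι : Type*} [Fintype ι] [DecidableEq ι]
    {x w : EuclideanSpace ℝ ι} {T : Finset ι} (hT : T.Nonempty) (hx : ‖x‖ = 1)
    (hw : {i | w i ≠ 0} ⊆ T) :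
    ∃ z : EuclideanSpace ℝ ι, ‖z‖ = 1 ∧ {i | z i ≠ 0} ⊆ T ∧ dist x z ≤ 2 * dist x w := by
  rcases eq_or_ne w 0 with rfl | hw0
  · obtain ⟨i₀, hi₀⟩ := hT
    refine ⟨EuclideanSpace.single i₀ 1, by simp, fun i hi => ?_, ?_⟩
    · by_contra h
      simp_all
    · simpa [hx, one_add_one_eq_two] using
        dist_le_norm_add_norm x (EuclideanSpace.single i₀ (1 : ℝ))
  refine ⟨NormedSpace.normalize w, NormedSpace.norm_normalize_eq_one_iff.mpr hw0,
    fun i hi => hw ?_, dist_normalize_le_two_mul_dist hx w⟩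
  simp_all [NormedSpace.normalize]

theorem rpow_sq_mul_rpow_div_le {p δ m k : ℝ} (hp0 : 0 < p) (hp2 : p < 2) (hδ : 0 < δ)
    (hm : 0 < m) (hk : m / δ ≤ k) :
    (m ^ (1 / p - 1 / 2)) ^ 2 * k ^ (1 - 2 / p) / (2 / p - 1) ≤
      ((2 / p - 1) ^ (-(1 : ℝ) / 2) * δ ^ (1 / p - 1 / 2)) ^ 2 := by
  have ha : 0 < 2 / p - 1 := by linarith [(one_lt_div hp0).mpr hp2]
  have hk0 : 0 < k := (div_pos hm hδ).trans_le hk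
  have hsq {y : ℝ} (hy : 0 ≤ y) (e : ℝ) : (y ^ e) ^ 2 = y ^ (2 * e) := by
    rw [← Real.rpow_mul_natCast hy, mul_comm]; norm_num
  have hmk : m / k ≤ δ := (div_le_iff₀ hk0).mpr (by rwa [div_le_iff₀' hδ] at hk)
  calc (m ^ (1 / p - 1 / 2)) ^ 2 * k ^ (1 - 2 / p) / (2 / p - 1)
      = (m / k) ^ (2 / p - 1) / (2 / p - 1) := by
        rw [hsq hm.le, Real.div_rpow hm.le hk0.le, show 1 - 2 / p = -(2 / p - 1) by ring,
          Real.rpow_neg hk0.le, show 2 * (1 / p - 1 / 2) = 2 / p - 1 by ring,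
          div_eq_mul_inv _ (k ^ _)]
    _ ≤ δ ^ (2 / p - 1) / (2 / p - 1) := by gcongr
    _ = ((2 / p - 1) ^ (-(1 : ℝ) / 2) * δ ^ (1 / p - 1 / 2)) ^ 2 := by
        rw [mul_pow, hsq ha.le, hsq hδ.le]
        norm_num [Real.rpow_neg_one]
        ring_nf

theorem stmt18_general (n m : ℕ) (p δ : ℝ) (hp0 : 0 < p) (hp2 : p < 2) (hδ : 0 < δ)
    (hm : 1 ≤ m) (hceil : ⌈(m : ℝ) / δ⌉₊ ≤ n)
    (ε : ℝ) (hε : ε = 2 * (2 / p - 1) ^ (-(1 : ℝ) / 2) * δ ^ (1 / p - 1 / 2)) :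
    ∀ x ∈ (((m : ℝ) ^ (1 / p - 1 / 2)) • weakLpBall n p) ∩
        sphere (0 : EuclideanSpace ℝ (Fin n)) 1,
      ∃ z : EuclideanSpace ℝ (Fin n),
        ‖z‖ = 1 ∧ {i | z i ≠ 0}.ncard ≤ ⌈(m : ℝ) / δ⌉₊ ∧ dist x z ≤ ε := by
  rintro x ⟨hxc, hx1⟩
  rw [mem_sphere_zero_iff_norm] at hx1
  have hm0 : (0 : ℝ) < m := by exact_mod_cast hm
  have hk : 0 < ⌈(m : ℝ) / δ⌉₊ := Nat.ceil_pos.mpr (by positivity)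
  have hc : 0 < (m : ℝ) ^ (1 / p - 1 / 2) := by positivity
  obtain ⟨T, hTk, hTsum⟩ := exists_card_eq_sum_compl_sq_le hp0 hp2 hc.le
    (ncard_le_div_rpow_of_mem_smul_weakLpBall hc hxc) hk hceil
  obtain ⟨w, hwT, hxw⟩ := exists_support_subset_norm_sub_sq_eq x T
  obtain ⟨z, hz1, hzT, hxz⟩ :=
    exists_norm_eq_one_support_subset_dist_le (Finset.card_pos.mp (hTk ▸ hk)) hx1 hwT
  have hxw_le : dist x w ≤ ε / 2 := by
    have hε2 : ε / 2 = (2 / p - 1) ^ (-(1 : ℝ) / 2) * δ ^ (1 / p - 1 / 2) := by rw [hε]; ring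
    have ha : 0 ≤ 2 / p - 1 := by rw [sub_nonneg, le_div_iff₀ hp0]; linarith
    have hε2_nonneg : 0 ≤ ε / 2 := hε2 ▸ by positivity
    rw [dist_eq_norm, ← pow_le_pow_iff_left₀ (norm_nonneg _) hε2_nonneg two_ne_zero, hxw, hε2]
    exact hTsum.trans (rpow_sq_mul_rpow_div_le hp0 hp2 hδ hm0 (Nat.le_ceil _))
  refine ⟨z, hz1, ?_, by linarith⟩
  calc {i | z i ≠ 0}.ncard ≤ (T : Set (Fin n)).ncard := Set.ncard_le_ncard hzT (Set.toFinite _)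
    _ = ⌈(m : ℝ) / δ⌉₊ := by rw [Set.ncard_coe_finset, hTk]

/-- Lemma `net`: for `0 < p < 2`, `δ > 0` and
`ε = 2(2/p − 1)^{−1/2} δ^{1/p−1/2}`, the set `U_{⌈m/δ⌉}` is an `ε`-cover of
`m^{1/p−1/2}B_{p,∞}ⁿ ∩ S^{n-1}`: every `x` in this set is within distance `ε` of some
`z ∈ S^{n-1}` with `|supp z| ≤ ⌈m/δ⌉`. -/
theorem stmt18 (n m : ℕ) (p δ : ℝ) (hp0 : 0 < p) (hp2 : p < 2) (hδ : 0 < δ)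
    (hm : 1 ≤ m) (hmn : m ≤ n) (hceil : ⌈(m : ℝ) / δ⌉₊ ≤ n)
    (ε : ℝ) (hε : ε = 2 * (2 / p - 1) ^ (-(1 : ℝ) / 2) * δ ^ (1 / p - 1 / 2)) :
    ∀ x ∈ (((m : ℝ) ^ (1 / p - 1 / 2)) • weakLpBall n p) ∩
        sphere (0 : EuclideanSpace ℝ (Fin n)) 1,
      ∃ z : EuclideanSpace ℝ (Fin n),
        ‖z‖ = 1 ∧ {i | z i ≠ 0}.ncard ≤ ⌈(m : ℝ) / δ⌉₊ ∧ dist x z ≤ ε :=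
  stmt18_general n m p δ hp0 hp2 hδ hm hceil ε hε
end
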